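/- Let (T, ⊣, ⊢, ·, ε, α) be a Hom-tridendriform color algebra. Define x∘y = x⊢y − y⊣x and [x,y] = x·y − ε(x,y)y·x. Then (T, ∘, [−,−], ε, α) is a Hom-post-Lie color algebra. -/
import Mathlib


section
variable {K G A : Type*} [Field K] [AddCommGroup G] [AddCommGroup A] [Module K A]

/-- x ∘ y = x ⊢ y − y ⊣ x. -/
def tOp (l r : A →ₗ[K] A →ₗ[K] A) (x y : A) : A := r x y - l y x

/-- [x,y] = x · y − ε(x,y) y · x for x, y of degrees a, b. -/
def tBr (ε : G → G → K) (d : A →ₗ[K] A →ₗ[K] A) (a b : G) (x y : A) : A :=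
  d x y - ε a b • d y x

end

/-- a Hom-tridendriform color algebra gives a Hom-post-Lie color
algebra via x∘y = x⊢y − y⊣x and [x,y] = x·y − ε(x,y)y·x. -/
theorem stmt_15 {K G A : Type*} [Field K] [AddCommGroup G] [AddCommGroup A] [Module K A]
    (ε : G → G → K) (𝒜 : G → Submodule K A)
    (hεs : ∀ a b, ε a b * ε b a = 1)
    (hεr : ∀ a b c, ε a (b + c) = ε a b * ε a c)
    (hεl : ∀ a b c, ε (a + b) c = ε a c * ε b c)
    (l r d : A →ₗ[K] A →ₗ[K] A) (α : A →ₗ[K] A)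
    (hl : ∀ a b : G, ∀ x ∈ 𝒜 a, ∀ y ∈ 𝒜 b, l x y ∈ 𝒜 (a + b))
    (hr : ∀ a b : G, ∀ x ∈ 𝒜 a, ∀ y ∈ 𝒜 b, r x y ∈ 𝒜 (a + b))
    (hd : ∀ a b : G, ∀ x ∈ 𝒜 a, ∀ y ∈ 𝒜 b, d x y ∈ 𝒜 (a + b))
    (hα : ∀ a : G, ∀ x ∈ 𝒜 a, α x ∈ 𝒜 a)
    -- Hom-tridendriform color algebra axioms
    (h1 : ∀ a b c : G, ∀ x ∈ 𝒜 a, ∀ y ∈ 𝒜 b, ∀ z ∈ 𝒜 c,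
      l (l x y) (α z) = l (α x) (l y z + ε c b • r y z + ε c b • d y z))
    (h2 : ∀ a b c : G, ∀ x ∈ 𝒜 a, ∀ y ∈ 𝒜 b, ∀ z ∈ 𝒜 c,
      l (r x y) (α z) = ε c a • r (α x) (l y z))
    (h3 : ∀ a b c : G, ∀ x ∈ 𝒜 a, ∀ y ∈ 𝒜 b, ∀ z ∈ 𝒜 c,
      r (α x) (r y z) = r (ε a b • l x y + r x y + d x y) (α z))
    (h4 : ∀ a b c : G, ∀ x ∈ 𝒜 a, ∀ y ∈ 𝒜 b, ∀ z ∈ 𝒜 c,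
      d (l x y) (α z) = ε b a • d (α x) (r y z))
    (h5 : ∀ a b c : G, ∀ x ∈ 𝒜 a, ∀ y ∈ 𝒜 b, ∀ z ∈ 𝒜 c,
      d (r x y) (α z) = r (α x) (d y z))
    (h6 : ∀ a b c : G, ∀ x ∈ 𝒜 a, ∀ y ∈ 𝒜 b, ∀ z ∈ 𝒜 c,
      l (d x y) (α z) = ε c a • d (α x) (l y z))
    (h7 : ∀ a b c : G, ∀ x ∈ 𝒜 a, ∀ y ∈ 𝒜 b, ∀ z ∈ 𝒜 c,
      d (d x y) (α z) = d (α x) (d y z)) :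
    -- ε-skew-symmetry of the bracket
    (∀ a b : G, ∀ x ∈ 𝒜 a, ∀ y ∈ 𝒜 b, tBr ε d a b x y = -(ε a b • tBr ε d b a y x)) ∧
    -- ε-Hom-Jacobi identity of the bracket
    (∀ a b c : G, ∀ x ∈ 𝒜 a, ∀ y ∈ 𝒜 b, ∀ z ∈ 𝒜 c,
      ε c a • tBr ε d a (b + c) (α x) (tBr ε d b c y z)
        + ε a b • tBr ε d b (c + a) (α y) (tBr ε d c a z x)
        + ε b c • tBr ε d c (a + b) (α z) (tBr ε d a b x y) = 0) ∧
    -- first Hom-post-Lie axiom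
    (∀ a b c : G, ∀ x ∈ 𝒜 a, ∀ y ∈ 𝒜 b, ∀ z ∈ 𝒜 c,
      tOp l r (α z) (tBr ε d a b x y) - tBr ε d (c + a) b (tOp l r z x) (α y)
        - ε c a • tBr ε d a (c + b) (α x) (tOp l r z y) = 0) ∧
    -- second Hom-post-Lie axiom
    (∀ a b c : G, ∀ x ∈ 𝒜 a, ∀ y ∈ 𝒜 b, ∀ z ∈ 𝒜 c,
      tOp l r (α z) (tOp l r y x) - ε c b • tOp l r (α y) (tOp l r z x)
        + ε c b • tOp l r (tOp l r y z) (α x) - tOp l r (tOp l r z y) (α x)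
        + ε c b • tOp l r (tBr ε d b c y z) (α x) = 0) := by
  have hne : ∀ a b : G, ε a b ≠ 0 := fun a b => left_ne_zero_of_mul_eq_one (hεs a b)
  have hinv : ∀ a b : G, ε b a = (ε a b)⁻¹ :=
    fun a b => (inv_eq_of_mul_eq_one_right (hεs a b)).symm
  refine ⟨?_, ?_, ?_, ?_⟩
  · intro a b x hx y hy
    simp only [tBr, smul_sub, smul_smul, hεs, one_smul]
    abel
  · intro a b c x hx y hy z hz
    simp only [tBr, map_sub, map_smul, LinearMap.sub_apply, LinearMap.smul_apply,
      smul_sub, smul_smul, hεr, hεl]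
    rw [h7 b c a y hy z hz x hx, h7 c b a z hz y hy x hx, h7 c a b z hz x hx y hy,
        h7 a c b x hx z hz y hy, h7 a b c x hx y hy z hz, h7 b a c y hy x hx z hz]
    match_scalars
    all_goals try simp only [hinv a b, hinv a c, hinv b c]
    all_goals field_simp [hne a b, hne a c, hne b c]
    all_goals ring
  · intro a b c x hx y hy z hz
    simp only [tOp, tBr, map_sub, map_smul, LinearMap.sub_apply, LinearMap.smul_apply,
      smul_sub, smul_smul, hεr, hεl]
    rw [h6 a b c x hx y hy z hz, h6 b a c y hy x hx z hz,
        h5 c a b z hz x hx y hy, h4 a c b x hx z hz y hy,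
        h5 c b a z hz y hy x hx, h4 b c a y hy z hz x hx]
    match_scalars
    all_goals try simp only [hinv a b, hinv a c, hinv b c]
    all_goals field_simp [hne a b, hne a c, hne b c]
    all_goals ring
  · intro a b c x hx y hy z hz
    simp only [tOp, tBr, map_sub, map_add, map_smul, LinearMap.sub_apply,
      LinearMap.add_apply, LinearMap.smul_apply, smul_sub, smul_add, smul_smul, hεr, hεl]
    rw [h3 c b a z hz y hy x hx, h3 b c a y hy z hz x hx,
        h1 a b c x hx y hy z hz, h1 a c b x hx z hz y hy,
        h2 b a c y hy x hx z hz, h2 c a b z hz x hx y hy]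
    simp only [map_add, map_smul, LinearMap.add_apply, LinearMap.smul_apply,
      smul_add, smul_smul]
    match_scalars
    all_goals try simp only [hinv a b, hinv a c, hinv b c]
    all_goals field_simp [hne a b, hne a c, hne b c]
    all_goals ring
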